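/- arXiv:2505.03625 — 6 statements merged into one kernel-verified Lean document; each statement's English description precedes it below -/
import Mathlib

section
/- Let 0 < α < 1, β₀ ≥ 0, T > 0, and let K_i be the iterated kernels defined by K₁(t) = β₀ t^{α−1} and K_{i+1}(t) = ∫₀ᵗ K₁(t − s) K_i(s) ds. Then for every nonnegative measurable function b on (0,T), every integer i with 2 ≤ i ≤ ⌈1/α⌉, and every t ∈ (0,T], one has (K_i * b)(t) := ∫₀ᵗ K_i(t − s) b(s) ds ≤ (Γ(α)^i / Γ(iα)) · β₀^{i−1} T^{(i−1)α} · ∫₀ᵗ K₁(t − s) b(s) ds, i.e. (K_i * b)(t) ≤ c β₀^{i−1} T^{(i−1)α} (K₁ * b)(t) with c = Γ(α)^i / Γ(iα). -/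
open MeasureTheory Set
open scoped ENNReal

private lemma beta_real' {a c : ℝ} (ha : 0 < a) (hc : 0 < c) {t : ℝ} (ht : 0 < t) :
    ∫ s in (0:ℝ)..t, s ^ (c - 1) * (t - s) ^ (a - 1)
      = Real.Gamma c * Real.Gamma a / Real.Gamma (c + a) * t ^ (c + a - 1) := by
  have key := Complex.betaIntegral_scaled (c : ℂ) (a : ℂ) ht
  have hre : (∫ x in (0:ℝ)..t, (x : ℂ) ^ ((c:ℂ) - 1) * ((t : ℂ) - x) ^ ((a:ℂ) - 1))
      = ((∫ s in (0:ℝ)..t, s ^ (c - 1) * (t - s) ^ (a - 1) : ℝ) : ℂ) := by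
    rw [← intervalIntegral.integral_ofReal]
    refine intervalIntegral.integral_congr fun x hx => ?_
    rw [uIcc_of_le ht.le] at hx
    push_cast
    rw [Complex.ofReal_cpow hx.1, Complex.ofReal_cpow (by linarith [hx.2] : (0:ℝ) ≤ t - x)]
    push_cast
    ring
  rw [hre] at key
  have hGamma : Complex.Gamma (c + a) ≠ 0 :=
    Complex.Gamma_ne_zero_of_re_pos (by simp; positivity)
  have hbeta := Complex.Gamma_mul_Gamma_eq_betaIntegral
    (s := (c:ℂ)) (t := (a:ℂ)) (by simpa using hc) (by simpa using ha)
  have : ((∫ s in (0:ℝ)..t, s ^ (c - 1) * (t - s) ^ (a - 1) : ℝ) : ℂ)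
      = ((Real.Gamma c * Real.Gamma a / Real.Gamma (c + a) * t ^ (c + a - 1) : ℝ) : ℂ) := by
    rw [key]
    have hb : Complex.betaIntegral c a
        = Complex.Gamma c * Complex.Gamma a / Complex.Gamma (c + a) := by
      field_simp at hbeta ⊢
      rw [hbeta]
    rw [hb, show ((c:ℂ) + a - 1) = ((c + a - 1 : ℝ) : ℂ) by push_cast; ring,
      ← Complex.ofReal_cpow ht.le]
    push_cast [← Complex.Gamma_ofReal]
    ring
  exact_mod_cast this

private lemma K_formula (α : ℝ) (hα0 : 0 < α) (β₀ : ℝ)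
    (K : ℕ → ℝ → ℝ)
    (hK1 : ∀ t : ℝ, 0 < t → K 1 t = β₀ * t ^ (α - 1))
    (hKrec : ∀ i : ℕ, 1 ≤ i → ∀ t : ℝ, 0 < t →
      K (i + 1) t = ∫ s in (0 : ℝ)..t, K 1 (t - s) * K i s) :
    ∀ i : ℕ, 1 ≤ i → ∀ t : ℝ, 0 < t →
      K i t = β₀ ^ i * Real.Gamma α ^ i / Real.Gamma ((i:ℝ) * α) * t ^ ((i:ℝ) * α - 1) := by
  intro i
  induction i with
  | zero => omega
  | succ n ih =>
    intro _ t ht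
    rcases Nat.eq_zero_or_pos n with hn | hn
    · subst hn
      rw [hK1 t ht]
      have hΓ : Real.Gamma α ≠ 0 := (Real.Gamma_pos_of_pos hα0).ne'
      push_cast
      field_simp
    · have hrec := hKrec n hn t ht
      have hΓn : 0 < Real.Gamma ((n:ℝ) * α) :=
        Real.Gamma_pos_of_pos (by positivity)
      have hΓ : 0 < Real.Gamma α := Real.Gamma_pos_of_pos hα0
      set C : ℝ := β₀ ^ n * Real.Gamma α ^ n / Real.Gamma ((n:ℝ) * α) with hC
      have hcongr : ∫ s in (0:ℝ)..t, K 1 (t - s) * K n s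
          = ∫ s in (0:ℝ)..t, (β₀ * C) * (s ^ ((n:ℝ) * α - 1) * (t - s) ^ (α - 1)) := by
        rw [intervalIntegral.integral_of_le ht.le, intervalIntegral.integral_of_le ht.le,
          integral_Ioc_eq_integral_Ioo, integral_Ioc_eq_integral_Ioo]
        refine setIntegral_congr_fun measurableSet_Ioo fun s hs => ?_
        rw [hK1 (t - s) (by linarith [hs.2]), ih hn s hs.1]
        ring
      rw [hrec, hcongr, intervalIntegral.integral_const_mul,
        beta_real' hα0 (by positivity : (0:ℝ) < (n:ℝ) * α) ht]
      have hΓne : Real.Gamma ((n:ℝ) * α) ≠ 0 := hΓn.ne'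
      rw [hC]
      push_cast
      rw [show (n:ℝ) * α + α = ((n:ℝ) + 1) * α by ring]
      field_simp
      ring

/-- Comparison of iterated convolutions with the first convolution (step in the proof
of the paper's generalized Gronwall inequality, Lemma 2.2):
`(K_i * b)(t) ≤ (Γ(α)^i / Γ(iα)) β₀^{i-1} T^{(i-1)α} (K₁ * b)(t)` for `2 ≤ i ≤ ⌈1/α⌉`. -/
theorem stmt_2 (α : ℝ) (hα0 : 0 < α) (hα1 : α < 1) (β₀ : ℝ) (hβ₀ : 0 ≤ β₀)
    (T : ℝ) (hT : 0 < T)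
    (K : ℕ → ℝ → ℝ)
    (hK1 : ∀ t : ℝ, 0 < t → K 1 t = β₀ * t ^ (α - 1))
    (hKrec : ∀ i : ℕ, 1 ≤ i → ∀ t : ℝ, 0 < t →
      K (i + 1) t = ∫ s in (0 : ℝ)..t, K 1 (t - s) * K i s)
    (b : ℝ → ℝ≥0∞) (hb : Measurable b) :
    ∀ i : ℕ, 2 ≤ i → i ≤ ⌈1 / α⌉₊ → ∀ t ∈ Ioc (0 : ℝ) T,
      (∫⁻ s in Ioo (0 : ℝ) t, ENNReal.ofReal (K i (t - s)) * b s)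
        ≤ ENNReal.ofReal (Real.Gamma α ^ i / Real.Gamma ((i : ℝ) * α)
              * β₀ ^ (i - 1) * T ^ (((i : ℝ) - 1) * α))
          * ∫⁻ s in Ioo (0 : ℝ) t, ENNReal.ofReal (K 1 (t - s)) * b s := by
  have hform := K_formula α hα0 β₀ K hK1 hKrec
  intro i hi2 _ t ht
  have hΓi : 0 < Real.Gamma ((i:ℝ) * α) := Real.Gamma_pos_of_pos (by positivity)
  have hΓ : 0 < Real.Gamma α := Real.Gamma_pos_of_pos hα0
  set c : ℝ := Real.Gamma α ^ i / Real.Gamma ((i:ℝ) * α) * β₀ ^ (i - 1) * T ^ (((i:ℝ) - 1) * α)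
    with hc
  have hc0 : 0 ≤ c := by positivity
  have hpt : ∀ s ∈ Ioo (0:ℝ) t,
      ENNReal.ofReal (K i (t - s)) * b s
        ≤ ENNReal.ofReal c * (ENNReal.ofReal (K 1 (t - s)) * b s) := by
    intro s hs
    have hu : 0 < t - s := by linarith [hs.2]
    have huT : t - s ≤ T := by have := ht.2; linarith [hs.1]
    rw [← mul_assoc, ← ENNReal.ofReal_mul hc0]
    refine mul_le_mul_left (ENNReal.ofReal_le_ofReal ?_) _
    rw [hform i (by omega) (t - s) hu, hK1 (t - s) hu]
    have hexp : (i:ℝ) * α - 1 = (((i:ℝ) - 1) * α) + (α - 1) := by ring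
    rw [hexp, Real.rpow_add hu]
    have hβpow : β₀ ^ i = β₀ ^ (i - 1) * β₀ := by
      conv_lhs => rw [show i = (i - 1) + 1 by omega]
      rw [pow_succ]
    calc β₀ ^ i * Real.Gamma α ^ i / Real.Gamma ((i:ℝ) * α)
          * ((t - s) ^ (((i:ℝ) - 1) * α) * (t - s) ^ (α - 1))
        = (Real.Gamma α ^ i / Real.Gamma ((i:ℝ) * α) * β₀ ^ (i - 1)
            * (t - s) ^ (((i:ℝ) - 1) * α)) * (β₀ * (t - s) ^ (α - 1)) := by
          rw [hβpow]; ring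
      _ ≤ c * (β₀ * (t - s) ^ (α - 1)) := by
          refine mul_le_mul_of_nonneg_right ?_ (by positivity)
          rw [hc]
          refine mul_le_mul_of_nonneg_left ?_ (by positivity)
          exact Real.rpow_le_rpow hu.le huT (by
            have : (1:ℝ) ≤ (i:ℝ) := by exact_mod_cast Nat.one_le_of_lt hi2
            nlinarith)
  calc (∫⁻ s in Ioo (0 : ℝ) t, ENNReal.ofReal (K i (t - s)) * b s)
      ≤ ∫⁻ s in Ioo (0 : ℝ) t, ENNReal.ofReal c * (ENNReal.ofReal (K 1 (t - s)) * b s) := by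
        refine lintegral_mono_ae ?_
        rw [ae_restrict_iff' measurableSet_Ioo]
        exact Filter.Eventually.of_forall hpt
    _ = ENNReal.ofReal c * ∫⁻ s in Ioo (0 : ℝ) t, ENNReal.ofReal (K 1 (t - s)) * b s :=
        lintegral_const_mul' _ _ ENNReal.ofReal_ne_top
end

section
/- Let T > 0, τ > 0, and set t_n = nτ. Let β₁, β₂ ∈ (0,1), a₁, a₂, b ≥ 0, R > 0, and let (φⁿ) be a sequence of real numbers with 0 ≤ φⁿ ≤ R for all n ≥ 1 with t_n ≤ T. Suppose that φⁿ ≤ a₁ t_n^{−1} + a₂ t_n^{β₁−1} + b τ Σ_{j=2}^{n} t_{n−j+1}^{β₂−1} φ^{j−1} for all n ≥ 1 with 0 < t_n ≤ T (the sum being empty for n = 1). Then there exists a constant c = c(b, β₁, β₂, T, R), independent of τ, n, a₁ and a₂, such that φⁿ ≤ c ( a₁ t_n^{−1} (1 + |log τ|) + a₂ t_n^{β₁−1} ) for all n ≥ 1 with 0 < t_n ≤ T. -/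
/-!
The kernel is nonnegative, so by strong induction on `n` every sequence satisfying the inequality
lies below every supersolution `h ≥ g + b K h` with the same forcing `g` (`K` the discrete
convolution); supersolutions can be added and scaled, so it suffices to build one for each forcing.

For `t^{θ-1}`, `0 < θ ≤ 1`, take `2 t^{θ-1} e^{μ t}`: from `s^{β-1} e^{-μ s} ≤ μ^{-β/2} s^{β/2-1}`
and the discrete Beta-function estimate `τ ∑ t_{n-k}^{β/2-1} t_k^{θ-1} ≲ t_n^{β/2+θ-1}` (split
the sum at `k = n/2`), `K` of the weight is `O(μ^{-β/2})` times the weight, uniformly in `τ`.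

For `t⁻¹` the same splitting produces the harmonic sum `∑ 1/k ≤ 1 + log n ≲ 1 + |log τ|`, so
`K t⁻¹ ≲ (1 + |log τ|) t^{β-1}`, a remainder absorbed by the supersolution for `t^{β-1}`.
-/

open Finset Real Filter Topology

lemma mul_rpow_sub_one_le_rpow_sub_rpow {γ τ a : ℝ} (hγ0 : 0 ≤ γ) (hγ1 : γ ≤ 1)
    (hτa : τ ≤ a) (ha : 0 < a) :
    γ * τ * a ^ (γ - 1) ≤ a ^ γ - (a - τ) ^ γ := by
  -- Bernoulli: `(1 - τ / a) ^ γ ≤ 1 - γ τ / a`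
  have hBern := rpow_one_add_le_one_add_mul_self (s := -(τ / a))
    (by rw [neg_le_neg_iff, div_le_one ha]; exact hτa) hγ0 hγ1
  have hsplit : (a - τ) ^ γ = a ^ γ * (1 + -(τ / a)) ^ γ := by
    rw [← mul_rpow ha.le (by rw [← sub_eq_add_neg, sub_nonneg, div_le_one ha]; exact hτa)]
    congr 1; field_simp; ring
  rw [hsplit]
  have := mul_le_mul_of_nonneg_left hBern (rpow_nonneg ha.le γ)
  calc γ * τ * a ^ (γ - 1) = a ^ γ - a ^ γ * (1 + γ * -(τ / a)) := by
        rw [rpow_sub_one ha.ne']; field_simp; ring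
    _ ≤ _ := by linarith

lemma sum_Icc_rpow_le {γ τ : ℝ} (hγ0 : 0 < γ) (hγ1 : γ ≤ 1) (hτ : 0 < τ) (N : ℕ) :
    τ * ∑ k ∈ Icc 1 N, ((k : ℝ) * τ) ^ (γ - 1) ≤ ((N : ℝ) * τ) ^ γ / γ := by
  induction N with
  | zero => simp [zero_rpow hγ0.ne']
  | succ N ih =>
    have hstep := mul_rpow_sub_one_le_rpow_sub_rpow hγ0.le hγ1 (τ := τ)
      (a := ((N + 1 : ℕ) : ℝ) * τ) (by push_cast; nlinarith [N.cast_nonneg (α := ℝ)])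
      (by positivity)
    rw [show ((N + 1 : ℕ) : ℝ) * τ - τ = (N : ℝ) * τ by push_cast; ring] at hstep
    rw [sum_Icc_succ_top (by omega), mul_add, le_div_iff₀ hγ0]
    rw [le_div_iff₀ hγ0] at ih
    nlinarith

lemma sum_Ico_rpow_le {γ τ : ℝ} (hγ0 : 0 < γ) (hγ1 : γ ≤ 1) (hτ : 0 < τ) (n : ℕ) :
    τ * ∑ k ∈ Ico 1 n, ((k : ℝ) * τ) ^ (γ - 1) ≤ ((n : ℝ) * τ) ^ γ / γ :=
  (mul_le_mul_of_nonneg_left (sum_le_sum_of_subset_of_nonneg Ico_subset_Icc_self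
    fun _ _ _ => by positivity) hτ.le).trans (sum_Icc_rpow_le hγ0 hγ1 hτ n)

lemma sum_Ico_inv_le_one_add_log (n : ℕ) : ∑ k ∈ Ico 1 n, (k : ℝ)⁻¹ ≤ 1 + log n := by
  calc ∑ k ∈ Ico 1 n, (k : ℝ)⁻¹ ≤ ∑ k ∈ Icc 1 n, (k : ℝ)⁻¹ :=
        sum_le_sum_of_subset_of_nonneg Ico_subset_Icc_self fun _ _ _ => by positivity
    _ = harmonic n := by simp [harmonic_eq_sum_Icc]
    _ ≤ 1 + log n := harmonic_le_one_add_log n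

lemma two_add_log_le {T τ : ℝ} {n : ℕ} (hτ : 0 < τ) (hn : 1 ≤ n) (hnT : (n : ℝ) * τ ≤ T) :
    2 + log n ≤ (2 + |log T|) * (1 + |log τ|) := by
  have hn0 : (0 : ℝ) < n := by exact_mod_cast hn
  have hlog : log n ≤ |log T| + |log τ| := by
    have h := log_le_log (by positivity) hnT
    rw [log_mul hn0.ne' hτ.ne'] at h
    linarith [le_abs_self (log T), neg_abs_le (log τ)]
  nlinarith [abs_nonneg (log T), abs_nonneg (log τ)]

lemma rpow_le_exp {x α : ℝ} (hx : 0 ≤ x) (hα0 : 0 ≤ α) (hα1 : α ≤ 1) : x ^ α ≤ exp x := by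
  rcases le_or_gt x 1 with h | h
  · exact (rpow_le_one hx h hα0).trans (one_le_exp hx)
  · calc x ^ α ≤ x ^ (1 : ℝ) := rpow_le_rpow_of_exponent_le h.le hα1
      _ ≤ exp x := by rw [rpow_one]; linarith [add_one_le_exp x]

lemma rpow_le_rpow_mul_exp {s μ α β : ℝ} (hs : 0 < s) (hμ : 0 < μ) (hα0 : 0 ≤ α) (hα1 : α ≤ 1) :
    s ^ (β - 1) ≤ μ ^ (-α) * s ^ (β - α - 1) * exp (μ * s) := by
  have hfactor : μ ^ (-α) * s ^ (β - α - 1) = s ^ (β - 1) * ((μ * s) ^ α)⁻¹ := by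
    rw [mul_rpow hμ.le hs.le, rpow_neg hμ.le, show β - α - 1 = (β - 1) + -α by ring,
      rpow_add hs, rpow_neg hs.le, mul_inv]
    ring
  have hexp := rpow_le_exp (mul_pos hμ hs).le hα0 hα1
  have hpos : 0 < (μ * s) ^ α := rpow_pos_of_pos (mul_pos hμ hs) α
  rw [hfactor, mul_assoc, le_mul_iff_one_le_right (rpow_pos_of_pos hs _),
    inv_mul_eq_div, one_le_div hpos]
  exact hexp

lemma half_rpow_sub_one_le {t γ : ℝ} (ht : 0 < t) (hγ : 0 ≤ γ) :
    (t / 2) ^ (γ - 1) ≤ 2 * t ^ (γ - 1) := by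
  have h2 : (2 : ℝ) ^ (1 - γ) ≤ 2 := by
    calc (2 : ℝ) ^ (1 - γ) ≤ 2 ^ (1 : ℝ) := rpow_le_rpow_of_exponent_le one_le_two (by linarith)
      _ = 2 := rpow_one 2
  rw [div_rpow ht.le zero_le_two, div_eq_mul_inv, ← rpow_neg zero_le_two, neg_sub, mul_comm]
  gcongr

lemma sum_Ico_mul_le_of_split {n : ℕ} {F G : ℕ → ℝ} {F₀ G₀ : ℝ}
    (hF : ∀ k, 0 ≤ F k) (hG : ∀ k, 0 ≤ G k)
    (hF₀ : ∀ k, n ≤ 2 * k → F k ≤ F₀) (hG₀ : ∀ k, n ≤ 2 * k → G k ≤ G₀) :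
    ∑ k ∈ Ico 1 n, F (n - k) * G k ≤ F₀ * ∑ k ∈ Ico 1 n, G k + G₀ * ∑ k ∈ Ico 1 n, F k := by
  have hF₀0 : 0 ≤ F₀ := (hF n).trans (hF₀ n (by omega))
  have hG₀0 : 0 ≤ G₀ := (hG n).trans (hG₀ n (by omega))
  have hreflect : ∑ k ∈ Ico 1 n, F (n - k) = ∑ k ∈ Ico 1 n, F k := by
    apply sum_nbij' (n - ·) (n - ·) <;> intro k hk <;> simp only [mem_Ico] at * <;> omega
  rw [← hreflect, mul_sum, mul_sum, ← sum_add_distrib]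
  refine sum_le_sum fun k hk => ?_
  rcases le_total (2 * k) n with h | h
  · nlinarith [hF₀ (n - k) (by omega), hF (n - k), hG k]
  · nlinarith [hG₀ k h, hF (n - k), hG k]

noncomputable def discreteConv (τ β : ℝ) (u : ℕ → ℝ) (n : ℕ) : ℝ :=
  τ * ∑ k ∈ Ico 1 n, (((n - k : ℕ) : ℝ) * τ) ^ (β - 1) * u k

section discreteConv

variable {τ β : ℝ} {u v : ℕ → ℝ} {n : ℕ}

lemma discreteConv_eq_sum_Icc (τ β : ℝ) (u : ℕ → ℝ) (n : ℕ) :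
    discreteConv τ β u n
      = τ * ∑ j ∈ Icc 2 n, (((n - j + 1 : ℕ) : ℝ) * τ) ^ (β - 1) * u (j - 1) := by
  unfold discreteConv
  congr 1
  apply sum_nbij' (· + 1) (· - 1) <;> intro k hk <;> simp only [mem_Ico, mem_Icc] at *
    <;> try omega
  rw [show n - (k + 1) + 1 = n - k by omega, Nat.add_sub_cancel]

lemma discreteConv_add (τ β : ℝ) (u v : ℕ → ℝ) (n : ℕ) :
    discreteConv τ β (u + v) n = discreteConv τ β u n + discreteConv τ β v n := by
  simp only [discreteConv, Pi.add_apply, mul_add, sum_add_distrib]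

lemma discreteConv_smul (τ β c : ℝ) (u : ℕ → ℝ) (n : ℕ) :
    discreteConv τ β (c • u) n = c * discreteConv τ β u n := by
  simp only [discreteConv, Pi.smul_apply, smul_eq_mul, mul_sum]
  exact sum_congr rfl fun _ _ => by ring

lemma discreteConv_mono (hτ : 0 ≤ τ) (h : ∀ k ∈ Ico 1 n, u k ≤ v k) :
    discreteConv τ β u n ≤ discreteConv τ β v n :=
  mul_le_mul_of_nonneg_left (sum_le_sum fun k hk => by gcongr; exact h k hk) hτ

lemma discreteConv_rpow_le {θ : ℝ} (hβ0 : 0 < β) (hβ1 : β ≤ 1) (hθ0 : 0 < θ) (hθ1 : θ ≤ 1)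
    (hτ : 0 < τ) (hn : 1 ≤ n) :
    discreteConv τ β (fun k => ((k : ℝ) * τ) ^ (θ - 1)) n
      ≤ (2 / θ + 2 / β) * ((n : ℝ) * τ) ^ (β + θ - 1) := by
  set t := (n : ℝ) * τ
  have ht : 0 < t := by positivity
  have hhalf : ∀ γ : ℝ, γ ≤ 1 → ∀ k : ℕ, n ≤ 2 * k →
      ((k : ℝ) * τ) ^ (γ - 1) ≤ (t / 2) ^ (γ - 1) := by
    intro γ hγ k hk
    have : (n : ℝ) ≤ 2 * k := by exact_mod_cast hk
    exact rpow_le_rpow_of_nonpos (by positivity) (by nlinarith) (by linarith)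
  have hsplit := sum_Ico_mul_le_of_split (n := n) (fun _ => by positivity) (fun _ => by positivity)
    (hhalf β hβ1) (hhalf θ hθ1)
  calc discreteConv τ β (fun k => ((k : ℝ) * τ) ^ (θ - 1)) n
      ≤ (t / 2) ^ (β - 1) * (τ * ∑ k ∈ Ico 1 n, ((k : ℝ) * τ) ^ (θ - 1))
        + (t / 2) ^ (θ - 1) * (τ * ∑ k ∈ Ico 1 n, ((k : ℝ) * τ) ^ (β - 1)) :=
        (mul_le_mul_of_nonneg_left hsplit hτ.le).trans_eq (by ring)
    _ ≤ (2 * t ^ (β - 1)) * (t ^ θ / θ) + (2 * t ^ (θ - 1)) * (t ^ β / β) := by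
        gcongr
        exacts [half_rpow_sub_one_le ht hβ0.le, sum_Ico_rpow_le hθ0 hθ1 hτ n,
          half_rpow_sub_one_le ht hθ0.le, sum_Ico_rpow_le hβ0 hβ1 hτ n]
    _ = 2 / θ * (t ^ (β - 1) * t ^ θ) + 2 / β * (t ^ (θ - 1) * t ^ β) := by ring
    _ = (2 / θ + 2 / β) * t ^ (β + θ - 1) := by
        rw [← rpow_add ht, ← rpow_add ht, show θ - 1 + β = β - 1 + θ by ring,
          show β + θ - 1 = β - 1 + θ by ring]
        ring

lemma discreteConv_inv_le (hβ0 : 0 < β) (hβ1 : β ≤ 1) (hτ : 0 < τ) (hn : 1 ≤ n) :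
    discreteConv τ β (fun k => ((k : ℝ) * τ)⁻¹) n
      ≤ 2 / β * (2 + log n) * ((n : ℝ) * τ) ^ (β - 1) := by
  set t := (n : ℝ) * τ
  have ht : 0 < t := by positivity
  have hsplit := sum_Ico_mul_le_of_split (n := n) (F₀ := (t / 2) ^ (β - 1)) (G₀ := 2 * t⁻¹)
    (F := fun k => ((k : ℝ) * τ) ^ (β - 1)) (G := fun k => ((k : ℝ) * τ)⁻¹)
    (fun _ => by positivity) (fun _ => by positivity)
    (fun k hk => by
      have : (n : ℝ) ≤ 2 * k := by exact_mod_cast hk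
      exact rpow_le_rpow_of_nonpos (by positivity) (by nlinarith) (by linarith))
    (fun k hk => by
      have : (n : ℝ) ≤ 2 * k := by exact_mod_cast hk
      rw [← div_eq_mul_inv, ← inv_div]
      exact inv_anti₀ (by positivity) (by nlinarith))
  have hharm : τ * ∑ k ∈ Ico 1 n, ((k : ℝ) * τ)⁻¹ ≤ 1 + log n := by
    rw [mul_sum]
    refine le_of_eq_of_le (sum_congr rfl fun k _ => ?_) (sum_Ico_inv_le_one_add_log n)
    field_simp
  have hlog : 0 ≤ log n := log_natCast_nonneg n
  calc discreteConv τ β (fun k => ((k : ℝ) * τ)⁻¹) n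
      ≤ (t / 2) ^ (β - 1) * (τ * ∑ k ∈ Ico 1 n, ((k : ℝ) * τ)⁻¹)
        + 2 * t⁻¹ * (τ * ∑ k ∈ Ico 1 n, ((k : ℝ) * τ) ^ (β - 1)) :=
        (mul_le_mul_of_nonneg_left hsplit hτ.le).trans_eq (by ring)
    _ ≤ (2 * t ^ (β - 1)) * (1 + log n) + 2 * t⁻¹ * (t ^ β / β) := by
        gcongr
        exacts [half_rpow_sub_one_le ht hβ0.le, sum_Ico_rpow_le hβ0 hβ1 hτ n]
    _ = (2 * (1 + log n) + 2 / β) * t ^ (β - 1) := by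
        rw [rpow_sub_one ht.ne']
        ring
    _ ≤ 2 / β * (2 + log n) * t ^ (β - 1) := by
        gcongr
        have : 2 ≤ 2 / β := by rw [le_div_iff₀ hβ0]; linarith
        nlinarith

lemma discreteConv_rpow_mul_exp_le {θ μ T : ℝ} (hβ0 : 0 < β) (hβ1 : β ≤ 1) (hθ0 : 0 < θ)
    (hθ1 : θ ≤ 1) (hμ : 0 < μ) (hτ : 0 < τ) (hn : 1 ≤ n) (hnT : (n : ℝ) * τ ≤ T) :
    discreteConv τ β (fun k => ((k : ℝ) * τ) ^ (θ - 1) * exp (μ * ((k : ℝ) * τ))) n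
      ≤ μ ^ (-(β / 2)) * ((4 / β + 2 / θ) * T ^ (β / 2))
        * (((n : ℝ) * τ) ^ (θ - 1) * exp (μ * ((n : ℝ) * τ))) := by
  set t := (n : ℝ) * τ with ht_def
  have ht : 0 < t := by positivity
  -- the weight turns `t_{n-k}^{β-1}` into `μ^{-β/2} t_{n-k}^{β/2-1}`, a kernel of the same kind
  have hweight : discreteConv τ β (fun k => ((k : ℝ) * τ) ^ (θ - 1) * exp (μ * ((k : ℝ) * τ))) n
      ≤ μ ^ (-(β / 2)) * exp (μ * t)
        * discreteConv τ (β / 2) (fun k => ((k : ℝ) * τ) ^ (θ - 1)) n := by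
    simp only [discreteConv, mul_sum]
    refine sum_le_sum fun k hk => ?_
    have hk' : k < n := (mem_Ico.1 hk).2
    set s := ((n - k : ℕ) : ℝ) * τ
    have hs : 0 < s := by
      have : (0 : ℝ) < (n - k : ℕ) := by exact_mod_cast Nat.sub_pos_of_lt hk'
      positivity
    have hexp : exp (μ * ((k : ℝ) * τ)) = exp (μ * t) / exp (μ * s) := by
      rw [← exp_sub, show s = ((n : ℝ) - k) * τ by rw [← Nat.cast_sub hk'.le], ht_def]
      ring_nf
    have hkernel := rpow_le_rpow_mul_exp (β := β) (α := β / 2) hs hμ (by positivity) (by linarith)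
    rw [show β - β / 2 - 1 = β / 2 - 1 by ring] at hkernel
    calc τ * (s ^ (β - 1) * (((k : ℝ) * τ) ^ (θ - 1) * exp (μ * ((k : ℝ) * τ))))
        = s ^ (β - 1) * (τ * ((k : ℝ) * τ) ^ (θ - 1) * (exp (μ * t) / exp (μ * s))) := by
          rw [hexp]; ring
      _ ≤ μ ^ (-(β / 2)) * s ^ (β / 2 - 1) * exp (μ * s)
          * (τ * ((k : ℝ) * τ) ^ (θ - 1) * (exp (μ * t) / exp (μ * s))) := by
          gcongr
      _ = _ := by field_simp
  have hpow : t ^ (β / 2 + θ - 1) ≤ T ^ (β / 2) * t ^ (θ - 1) := by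
    rw [show β / 2 + θ - 1 = β / 2 + (θ - 1) by ring, rpow_add ht]
    gcongr
  calc _ ≤ μ ^ (-(β / 2)) * exp (μ * t) * ((2 / θ + 2 / (β / 2)) * t ^ (β / 2 + θ - 1)) :=
        hweight.trans <| by
          gcongr
          exact discreteConv_rpow_le (by positivity) (by linarith) hθ0 hθ1 hτ hn
    _ ≤ μ ^ (-(β / 2)) * exp (μ * t) * ((2 / θ + 2 / (β / 2)) * (T ^ (β / 2) * t ^ (θ - 1))) := by
        gcongr
    _ = _ := by ring

end discreteConv

def IsSupersolution (T τ b β : ℝ) (g h : ℕ → ℝ) : Prop :=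
  ∀ n : ℕ, 1 ≤ n → (n : ℝ) * τ ≤ T → g n + b * discreteConv τ β h n ≤ h n

namespace IsSupersolution

variable {T τ b β : ℝ} {g g' h h' : ℕ → ℝ}

lemma le_of_le_add_discreteConv {φ : ℕ → ℝ} (hh : IsSupersolution T τ b β g h) (hb : 0 ≤ b)
    (hτ : 0 ≤ τ)
    (hφ : ∀ n : ℕ, 1 ≤ n → (n : ℝ) * τ ≤ T → φ n ≤ g n + b * discreteConv τ β φ n) :
    ∀ n : ℕ, 1 ≤ n → (n : ℝ) * τ ≤ T → φ n ≤ h n := by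
  intro n
  induction n using Nat.strong_induction_on with
  | _ n ih =>
    intro hn hnT
    have hconv : discreteConv τ β φ n ≤ discreteConv τ β h n := by
      refine discreteConv_mono hτ fun k hk => ih k (mem_Ico.1 hk).2 (mem_Ico.1 hk).1 ?_
      have : (k : ℝ) ≤ n := by exact_mod_cast (mem_Ico.1 hk).2.le
      nlinarith
    calc φ n ≤ g n + b * discreteConv τ β φ n := hφ n hn hnT
      _ ≤ g n + b * discreteConv τ β h n := by gcongr
      _ ≤ h n := hh n hn hnT

lemma add (hh : IsSupersolution T τ b β g h) (hh' : IsSupersolution T τ b β g' h') :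
    IsSupersolution T τ b β (g + g') (h + h') := fun n hn hnT => by
  have := hh n hn hnT
  have := hh' n hn hnT
  simp only [Pi.add_apply, discreteConv_add]
  linarith

lemma smul {c : ℝ} (hh : IsSupersolution T τ b β g h) (hc : 0 ≤ c) :
    IsSupersolution T τ b β (c • g) (c • h) := fun n hn hnT => by
  have := mul_le_mul_of_nonneg_left (hh n hn hnT) hc
  simp only [Pi.smul_apply, smul_eq_mul, discreteConv_smul]
  linarith

lemma add_smul_of_le {f w : ℕ → ℝ} {c : ℝ} (hc : 0 ≤ c) (hw : IsSupersolution T τ b β f w)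
    (hg : ∀ n : ℕ, 1 ≤ n → (n : ℝ) * τ ≤ T → b * discreteConv τ β g n ≤ c * f n) :
    IsSupersolution T τ b β g (g + c • w) := fun n hn hnT => by
  have := mul_le_mul_of_nonneg_left (hw n hn hnT) hc
  have := hg n hn hnT
  simp only [Pi.add_apply, Pi.smul_apply, smul_eq_mul, discreteConv_add, discreteConv_smul]
  linarith

end IsSupersolution

section supersolutions

variable {T b β : ℝ}

lemma isSupersolution_rpow_mul_exp {θ μ τ : ℝ} (hβ0 : 0 < β) (hβ1 : β ≤ 1) (hθ0 : 0 < θ)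
    (hθ1 : θ ≤ 1) (hb : 0 ≤ b) (hμ : 0 < μ) (hτ : 0 < τ)
    (hsmall : b * (μ ^ (-(β / 2)) * ((4 / β + 2 / θ) * T ^ (β / 2))) ≤ 1 / 2) :
    IsSupersolution T τ b β (fun k : ℕ => ((k : ℝ) * τ) ^ (θ - 1))
      ((2 : ℝ) • fun k : ℕ => ((k : ℝ) * τ) ^ (θ - 1) * exp (μ * ((k : ℝ) * τ))) := by
  intro n hn hnT
  have hconv := discreteConv_rpow_mul_exp_le hβ0 hβ1 hθ0 hθ1 hμ hτ hn hnT
  have hexp : 1 ≤ exp (μ * ((n : ℝ) * τ)) := one_le_exp (by positivity)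
  have hpow : 0 ≤ ((n : ℝ) * τ) ^ (θ - 1) := by positivity
  simp only [discreteConv_smul, Pi.smul_apply, smul_eq_mul]
  nlinarith [mul_le_mul_of_nonneg_left hconv hb,
    mul_le_mul_of_nonneg_right hsmall (mul_nonneg hpow (exp_pos (μ * ((n : ℝ) * τ))).le)]

lemma exists_isSupersolution_rpow {θ : ℝ} (hβ0 : 0 < β) (hβ1 : β ≤ 1) (hθ0 : 0 < θ)
    (hθ1 : θ ≤ 1) (hb : 0 ≤ b) :
    ∃ C > 0, ∀ τ > 0, ∃ w : ℕ → ℝ,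
      IsSupersolution T τ b β (fun k : ℕ => ((k : ℝ) * τ) ^ (θ - 1)) w ∧
        ∀ n : ℕ, 1 ≤ n → (n : ℝ) * τ ≤ T → w n ≤ C * ((n : ℝ) * τ) ^ (θ - 1) := by
  have hlim : Tendsto (fun μ : ℝ => b * (μ ^ (-(β / 2)) * ((4 / β + 2 / θ) * T ^ (β / 2))))
      atTop (𝓝 0) := by
    simpa using ((tendsto_rpow_neg_atTop (by positivity : 0 < β / 2)).mul_const
      ((4 / β + 2 / θ) * T ^ (β / 2))).const_mul b
  obtain ⟨μ, hsmall, hμ⟩ :=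
    ((hlim.eventually (ge_mem_nhds (by norm_num : (0 : ℝ) < 1 / 2))).and
      (eventually_gt_atTop 0)).exists
  refine ⟨2 * exp (μ * T), by positivity, fun τ hτ => ⟨_,
    isSupersolution_rpow_mul_exp hβ0 hβ1 hθ0 hθ1 hb hμ hτ hsmall, fun n hn hnT => ?_⟩⟩
  have : exp (μ * ((n : ℝ) * τ)) ≤ exp (μ * T) := by gcongr
  simp only [Pi.smul_apply, smul_eq_mul]
  nlinarith [(by positivity : 0 ≤ ((n : ℝ) * τ) ^ (θ - 1))]

lemma exists_isSupersolution_inv (hβ0 : 0 < β) (hβ1 : β ≤ 1) (hb : 0 ≤ b) (hT : 0 < T) :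
    ∃ C > 0, ∀ τ > 0, ∃ w : ℕ → ℝ,
      IsSupersolution T τ b β (fun k : ℕ => ((k : ℝ) * τ)⁻¹) w ∧
        ∀ n : ℕ, 1 ≤ n → (n : ℝ) * τ ≤ T →
          w n ≤ C * (((n : ℝ) * τ)⁻¹ * (1 + |log τ|)) := by
  obtain ⟨C, hC, hw⟩ := exists_isSupersolution_rpow (T := T) hβ0 hβ1 hβ0 hβ1 hb
  set σ := b * (2 / β * (2 + |log T|))
  refine ⟨1 + σ * C * T ^ β, by positivity, fun τ hτ => ?_⟩
  obtain ⟨w, hsup, hle⟩ := hw τ hτ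
  refine ⟨_, hsup.add_smul_of_le (c := σ * (1 + |log τ|)) (by positivity) ?_, ?_⟩
  · intro n hn hnT
    calc b * discreteConv τ β (fun k : ℕ => ((k : ℝ) * τ)⁻¹) n
        ≤ b * (2 / β * (2 + log n) * ((n : ℝ) * τ) ^ (β - 1)) := by
          gcongr
          exact discreteConv_inv_le hβ0 hβ1 hτ hn
      _ ≤ b * (2 / β * ((2 + |log T|) * (1 + |log τ|)) * ((n : ℝ) * τ) ^ (β - 1)) := by
          gcongr
          exact two_add_log_le hτ hn hnT
      _ = _ := by ring
  · intro n hn hnT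
    have ht : 0 < (n : ℝ) * τ := by positivity
    have hpow : ((n : ℝ) * τ) ^ (β - 1) ≤ T ^ β * ((n : ℝ) * τ)⁻¹ := by
      rw [rpow_sub_one ht.ne', div_eq_mul_inv]
      gcongr
    have hL : 1 ≤ 1 + |log τ| := le_add_of_nonneg_right (abs_nonneg _)
    simp only [Pi.add_apply, Pi.smul_apply, smul_eq_mul]
    calc ((n : ℝ) * τ)⁻¹ + σ * (1 + |log τ|) * w n
        ≤ ((n : ℝ) * τ)⁻¹ * (1 + |log τ|)
          + σ * (1 + |log τ|) * (C * (T ^ β * ((n : ℝ) * τ)⁻¹)) := by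
          gcongr
          · exact le_mul_of_one_le_right (by positivity) hL
          · exact (hle n hn hnT).trans (by gcongr)
      _ = _ := by ring

end supersolutions

theorem stmt_7_general (T : ℝ) (hT : 0 < T) (β₁ β₂ : ℝ)
    (hβ₁0 : 0 < β₁) (hβ₁1 : β₁ < 1) (hβ₂0 : 0 < β₂) (hβ₂1 : β₂ < 1)
    (b R : ℝ) (hb : 0 ≤ b) :
    ∃ c : ℝ, 0 < c ∧ ∀ τ : ℝ, 0 < τ → ∀ a₁ a₂ : ℝ, 0 ≤ a₁ → 0 ≤ a₂ →
      ∀ φ : ℕ → ℝ,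
        (∀ n : ℕ, 1 ≤ n → (n : ℝ) * τ ≤ T → 0 ≤ φ n ∧ φ n ≤ R) →
        (∀ n : ℕ, 1 ≤ n → (n : ℝ) * τ ≤ T →
          φ n ≤ a₁ * ((n : ℝ) * τ)⁻¹ + a₂ * ((n : ℝ) * τ) ^ (β₁ - 1)
            + b * τ * ∑ j ∈ Finset.Icc 2 n,
                (((n - j + 1 : ℕ) : ℝ) * τ) ^ (β₂ - 1) * φ (j - 1)) →
        ∀ n : ℕ, 1 ≤ n → (n : ℝ) * τ ≤ T →
          φ n ≤ c * (a₁ * ((n : ℝ) * τ)⁻¹ * (1 + |Real.log τ|)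
            + a₂ * ((n : ℝ) * τ) ^ (β₁ - 1)) := by
  obtain ⟨C₁, hC₁, hw₁⟩ := exists_isSupersolution_inv hβ₂0 hβ₂1.le hb hT
  obtain ⟨C₂, hC₂, hw₂⟩ := exists_isSupersolution_rpow (T := T) hβ₂0 hβ₂1.le hβ₁0 hβ₁1.le hb
  refine ⟨C₁ + C₂, by positivity, fun τ hτ a₁ a₂ ha₁ ha₂ φ _ hφ n hn hnT => ?_⟩
  obtain ⟨w₁, hsup₁, hle₁⟩ := hw₁ τ hτ
  obtain ⟨w₂, hsup₂, hle₂⟩ := hw₂ τ hτ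
  have hcmp := ((hsup₁.smul ha₁).add (hsup₂.smul ha₂)).le_of_le_add_discreteConv hb hτ.le (φ := φ)
    fun n hn hnT => by
      simpa only [discreteConv_eq_sum_Icc, ← mul_assoc, Pi.add_apply, Pi.smul_apply, smul_eq_mul]
        using hφ n hn hnT
  have hX : 0 ≤ a₁ * ((n : ℝ) * τ)⁻¹ * (1 + |log τ|) := by positivity
  have hY : 0 ≤ a₂ * ((n : ℝ) * τ) ^ (β₁ - 1) := by positivity
  calc φ n ≤ a₁ * w₁ n + a₂ * w₂ n := hcmp n hn hnT
    _ ≤ a₁ * (C₁ * (((n : ℝ) * τ)⁻¹ * (1 + |log τ|))) + a₂ * (C₂ * ((n : ℝ) * τ) ^ (β₁ - 1)) := by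
      gcongr
      exacts [hle₁ n hn hnT, hle₂ n hn hnT]
    _ ≤ _ := by nlinarith

/-- Discrete Gronwall inequality with weakly singular kernel and singular right-hand side
(paper Lemma 6.2): if `0 ≤ φⁿ ≤ R` and
`φⁿ ≤ a₁ t_n⁻¹ + a₂ t_n^{β₁-1} + b τ Σ_{j=2}^n t_{n-j+1}^{β₂-1} φ^{j-1}` on `0 < t_n ≤ T`,
then `φⁿ ≤ c (a₁ t_n⁻¹ (1 + |log τ|) + a₂ t_n^{β₁-1})` with `c = c(b,β₁,β₂,T,R)`
independent of `τ`, `n`, `a₁`, `a₂`. -/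
theorem stmt_7 (T : ℝ) (hT : 0 < T) (β₁ β₂ : ℝ)
    (hβ₁0 : 0 < β₁) (hβ₁1 : β₁ < 1) (hβ₂0 : 0 < β₂) (hβ₂1 : β₂ < 1)
    (b R : ℝ) (hb : 0 ≤ b) (hR : 0 < R) :
    ∃ c : ℝ, 0 < c ∧ ∀ τ : ℝ, 0 < τ → ∀ a₁ a₂ : ℝ, 0 ≤ a₁ → 0 ≤ a₂ →
      ∀ φ : ℕ → ℝ,
        (∀ n : ℕ, 1 ≤ n → (n : ℝ) * τ ≤ T → 0 ≤ φ n ∧ φ n ≤ R) →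
        (∀ n : ℕ, 1 ≤ n → (n : ℝ) * τ ≤ T →
          φ n ≤ a₁ * ((n : ℝ) * τ)⁻¹ + a₂ * ((n : ℝ) * τ) ^ (β₁ - 1)
            + b * τ * ∑ j ∈ Finset.Icc 2 n,
                (((n - j + 1 : ℕ) : ℝ) * τ) ^ (β₂ - 1) * φ (j - 1)) →
        ∀ n : ℕ, 1 ≤ n → (n : ℝ) * τ ≤ T →
          φ n ≤ c * (a₁ * ((n : ℝ) * τ)⁻¹ * (1 + |Real.log τ|)
            + a₂ * ((n : ℝ) * τ) ^ (β₁ - 1)) :=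
  stmt_7_general T hT β₁ β₂ hβ₁0 hβ₁1 hβ₂0 hβ₂1 b R hb
end

section
/- Let 0 < α < 1, ν ∈ [0,1], and λ₁ > 0. Then there exists a constant c > 0, depending only на ν and λ₁ (for instance c = 4·max(1, λ₁^{−2ν})), such that for every t > 0, every T > 0, every sequence (λ_n)_{n≥1} of real numbers with λ_n ≥ λ₁ for all n, and every square-summable real sequence (a_n)_{n≥1}, one has Σ_{n=1}^{∞} ( (1 + λ_n T^α) t^{α−1} / ( λ_n^ν (1 + λ_n t^α) ) )² a_n² ≤ c ( t^{α−1} + t^{αν−1} T^α )² Σ_{n=1}^{∞} a_n². -/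
/-- Weighted `ℓ²` estimate from the paper's proof of Lemma 2.1(iii): there is `c > 0`,
depending only on `ν` and `lam₁` (the lower bound for the eigenvalues), such that for all
`0 < α < 1`, `t, T > 0`, all sequences `lam n ≥ lam₁ > 0` and all square-summable `(a_n)`,
`Σ ((1 + lam_n T^α) t^{α-1} / (lam_n^ν (1 + lam_n t^α)))² a_n²
  ≤ c (t^{α-1} + t^{αν-1} T^α)² Σ a_n²`. -/
theorem stmt_8 (ν lam₁ : ℝ) (hν0 : 0 ≤ ν) (hν1 : ν ≤ 1) (hlam₁ : 0 < lam₁) :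
    ∃ c : ℝ, 0 < c ∧ ∀ α : ℝ, 0 < α → α < 1 → ∀ t : ℝ, 0 < t → ∀ T : ℝ, 0 < T →
      ∀ lam : ℕ → ℝ, (∀ n, lam₁ ≤ lam n) →
        ∀ a : ℕ → ℝ, Summable (fun n => a n ^ 2) →
          (∑' n : ℕ, ((1 + lam n * T ^ α) * t ^ (α - 1)
              / (lam n ^ ν * (1 + lam n * t ^ α))) ^ 2 * a n ^ 2)
            ≤ c * (t ^ (α - 1) + t ^ (α * ν - 1) * T ^ α) ^ 2 * ∑' n : ℕ, a n ^ 2 := by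
  refine ⟨(max 1 (lam₁ ^ (-ν))) ^ 2, by positivity, ?_⟩
  intro α hα0 hα1 t ht T hT lam hlam a ha
  set M := max 1 (lam₁ ^ (-ν)) with hMdef
  have hM1 : (1:ℝ) ≤ M := le_max_left _ _
  have hM0 : 0 < M := lt_of_lt_of_le one_pos hM1
  set B := t ^ (α - 1) + t ^ (α * ν - 1) * T ^ α with hBdef
  have hBpos : 0 < B := by
    have := Real.rpow_pos_of_pos ht (α - 1)
    have := Real.rpow_pos_of_pos ht (α * ν - 1)
    have := Real.rpow_pos_of_pos hT α
    positivity
  have key : ∀ n, ((1 + lam n * T ^ α) * t ^ (α - 1)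
      / (lam n ^ ν * (1 + lam n * t ^ α))) ^ 2 ≤ M ^ 2 * B ^ 2 := by
    intro n
    have hl : 0 < lam n := lt_of_lt_of_le hlam₁ (hlam n)
    have hx : 0 < t ^ α := Real.rpow_pos_of_pos ht α
    have hy : 0 < T ^ α := Real.rpow_pos_of_pos hT α
    have hs : 0 < t ^ (α - 1) := Real.rpow_pos_of_pos ht _
    have hlnν : 0 < lam n ^ ν := Real.rpow_pos_of_pos hl ν
    have hlx : 0 < lam n * t ^ α := by positivity
    have hden : 0 < lam n ^ ν * (1 + lam n * t ^ α) := by positivity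
    have hxν : 0 < (t ^ α) ^ (ν - 1) := Real.rpow_pos_of_pos hx _
    -- M * lam n ^ ν ≥ 1
    have hA : (1:ℝ) ≤ M * lam n ^ ν := by
      have h1 : lam₁ ^ ν ≤ lam n ^ ν := Real.rpow_le_rpow hlam₁.le (hlam n) hν0
      have h2 : lam₁ ^ (-ν) ≤ M := le_max_right _ _
      have h3 : lam₁ ^ (-ν) * lam₁ ^ ν = 1 := by
        rw [← Real.rpow_add hlam₁]; simp
      nlinarith [Real.rpow_pos_of_pos hlam₁ (-ν), Real.rpow_pos_of_pos hlam₁ ν]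
    -- (λx)^{1-ν} ≤ 1 + λx
    have hB : (lam n * t ^ α) ^ (1 - ν) ≤ 1 + lam n * t ^ α := by
      rcases le_or_gt (lam n * t ^ α) 1 with h | h
      · have : (lam n * t ^ α) ^ (1 - ν) ≤ (lam n * t ^ α) ^ (0:ℝ) :=
          Real.rpow_le_rpow_of_exponent_ge hlx h (by linarith)
        rw [Real.rpow_zero] at this
        linarith
      · have : (lam n * t ^ α) ^ (1 - ν) ≤ (lam n * t ^ α) ^ (1:ℝ) :=
          Real.rpow_le_rpow_of_exponent_le h.le (by linarith)
        rw [Real.rpow_one] at this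
        linarith
    have hC : lam n ^ ν * (lam n * t ^ α) ^ (1 - ν) = lam n * (t ^ α) ^ (1 - ν) := by
      rw [Real.mul_rpow hl.le hx.le, ← mul_assoc, ← Real.rpow_add hl]
      norm_num
    have hD : (t ^ α) ^ (ν - 1) * (t ^ α) ^ (1 - ν) = 1 := by
      rw [← Real.rpow_add hx]; simp
    have he : α * ν - 1 = (α - 1) + α * (ν - 1) := by ring
    have hBeq : B = t ^ (α - 1) + t ^ (α - 1) * (t ^ α) ^ (ν - 1) * T ^ α := by
      rw [hBdef, he, Real.rpow_add ht, Real.rpow_mul ht.le]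
    have q1 : lam n * (t ^ α) ^ (1 - ν) ≤ lam n ^ ν * (1 + lam n * t ^ α) := by
      rw [← hC]; exact mul_le_mul_of_nonneg_left hB hlnν.le
    have e1 : t ^ (α - 1) ≤ M * t ^ (α - 1) * (lam n ^ ν * (1 + lam n * t ^ α)) := by
      nlinarith [mul_pos hs hlx, mul_le_mul_of_nonneg_left hA hs.le]
    have c0 : (0:ℝ) ≤ M * t ^ (α - 1) * (t ^ α) ^ (ν - 1) * T ^ α := by positivity
    have q5 := mul_le_mul_of_nonneg_left q1 c0
    have q2' : M * t ^ (α - 1) * (t ^ α) ^ (ν - 1) * T ^ α * (lam n * (t ^ α) ^ (1 - ν))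
        = M * t ^ (α - 1) * T ^ α * lam n := by
      linear_combination M * t ^ (α - 1) * T ^ α * lam n * hD
    rw [q2'] at q5
    have q6 : t ^ (α - 1) * T ^ α * lam n ≤ M * t ^ (α - 1) * T ^ α * lam n := by
      nlinarith [mul_pos (mul_pos hs hy) hl]
    have hfrac : (1 + lam n * T ^ α) * t ^ (α - 1)
        / (lam n ^ ν * (1 + lam n * t ^ α)) ≤ M * B := by
      rw [div_le_iff₀ hden, hBeq]
      nlinarith [e1, q5, q6]
    have hnn : 0 ≤ (1 + lam n * T ^ α) * t ^ (α - 1)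
        / (lam n ^ ν * (1 + lam n * t ^ α)) := by positivity
    calc ((1 + lam n * T ^ α) * t ^ (α - 1)
        / (lam n ^ ν * (1 + lam n * t ^ α))) ^ 2 ≤ (M * B) ^ 2 :=
          pow_le_pow_left₀ hnn hfrac 2
      _ = M ^ 2 * B ^ 2 := by ring
  have hle : ∀ n, ((1 + lam n * T ^ α) * t ^ (α - 1)
      / (lam n ^ ν * (1 + lam n * t ^ α))) ^ 2 * a n ^ 2
      ≤ M ^ 2 * B ^ 2 * a n ^ 2 :=
    fun n => mul_le_mul_of_nonneg_right (key n) (sq_nonneg _)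
  have hsum2 : Summable (fun n => M ^ 2 * B ^ 2 * a n ^ 2) := ha.mul_left _
  have hsum1 : Summable (fun n => ((1 + lam n * T ^ α) * t ^ (α - 1)
      / (lam n ^ ν * (1 + lam n * t ^ α))) ^ 2 * a n ^ 2) :=
    Summable.of_nonneg_of_le (fun n => by positivity) hle hsum2
  calc (∑' n : ℕ, ((1 + lam n * T ^ α) * t ^ (α - 1)
      / (lam n ^ ν * (1 + lam n * t ^ α))) ^ 2 * a n ^ 2)
      ≤ ∑' n : ℕ, M ^ 2 * B ^ 2 * a n ^ 2 := Summable.tsum_le_tsum hle hsum1 hsum2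
    _ = M ^ 2 * B ^ 2 * ∑' n : ℕ, a n ^ 2 := tsum_mul_left
    _ = M ^ 2 * B ^ 2 * ∑' n : ℕ, a n ^ 2 := rfl
end

section
/- Let β ∈ (0,1) and T > 0. Then there exists a constant C = C(β, T) such that for all τ and t with 0 < τ ≤ t ≤ T, one has ∫_τ^t (t + τ − s)^{β−1} s^{−1} ds ≤ C (1 + |log τ|) t^{β−1}. -/
open MeasureTheory

/-- Weakly singular logarithmic integral bound underlying the paper's proof of Lemma 4.15:
`∫_τ^t (t+τ-s)^{β-1} s⁻¹ ds ≤ C (1+|log τ|) t^{β-1}` for `0 < τ ≤ t ≤ T`. -/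
theorem stmt_9 (β T : ℝ) (hβ0 : 0 < β) (hβ1 : β < 1) (hT : 0 < T) :
    ∃ C : ℝ, 0 < C ∧ ∀ τ t : ℝ, 0 < τ → τ ≤ t → t ≤ T →
      (∫ s in τ..t, (t + τ - s) ^ (β - 1) * s⁻¹)
        ≤ C * (1 + |Real.log τ|) * t ^ (β - 1) := by
  refine ⟨2 * (max (Real.log T) 0 + 1) + 2 / β, by positivity, ?_⟩
  intro τ t hτ hτt htT
  have ht : 0 < t := lt_of_lt_of_le hτ hτt
  set f : ℝ → ℝ := fun s => (t + τ - s) ^ (β - 1) * s⁻¹ with hf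
  set g : ℝ → ℝ := fun s => (t/2) ^ (β-1) * s⁻¹ + (2/t) * (t + τ - s) ^ (β-1) with hg
  have hcont1 : ContinuousOn (fun s : ℝ => (t + τ - s) ^ (β-1)) (Set.Icc τ t) := by
    apply ContinuousOn.rpow_const (by fun_prop)
    intro s hs
    left
    have := hs.2
    intro h0
    nlinarith
  have hcont2 : ContinuousOn (fun s : ℝ => s⁻¹) (Set.Icc τ t) := by
    apply ContinuousOn.inv₀ continuousOn_id
    intro s hs
    exact ne_of_gt (lt_of_lt_of_le hτ hs.1)
  have huIcc : Set.uIcc τ t = Set.Icc τ t := Set.uIcc_of_le hτt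
  have hfint : IntervalIntegrable f volume τ t := by
    apply ContinuousOn.intervalIntegrable
    rw [huIcc]; exact hcont1.mul hcont2
  have hint1 : IntervalIntegrable (fun s : ℝ => (t/2)^(β-1) * s⁻¹) volume τ t := by
    apply ContinuousOn.intervalIntegrable
    rw [huIcc]; exact (continuousOn_const.mul hcont2)
  have hint2 : IntervalIntegrable (fun s : ℝ => (2/t) * (t + τ - s)^(β-1)) volume τ t := by
    apply ContinuousOn.intervalIntegrable
    rw [huIcc]; exact (continuousOn_const.mul hcont1)
  have hgint : IntervalIntegrable g volume τ t := hint1.add hint2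
  have hle : ∀ s ∈ Set.Icc τ t, f s ≤ g s := by
    intro s hs
    obtain ⟨hs1, hs2⟩ := hs
    have hsp : 0 < s := lt_of_lt_of_le hτ hs1
    have hbp : 0 < t + τ - s := by linarith
    rcases le_total s (t/2) with h | h
    · have hb2 : t/2 ≤ t + τ - s := by linarith
      have h1 : (t + τ - s) ^ (β-1) ≤ (t/2) ^ (β-1) :=
        Real.rpow_le_rpow_of_nonpos (by linarith) hb2 (by linarith)
      have h2 : f s ≤ (t/2) ^ (β-1) * s⁻¹ :=
        mul_le_mul_of_nonneg_right h1 (by positivity)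
      have h3 : 0 ≤ (2/t) * (t + τ - s) ^ (β-1) := by positivity
      simp only [hg]; linarith
    · have h1 : s⁻¹ ≤ 2/t := by
        calc s⁻¹ ≤ (t/2)⁻¹ := by
              apply inv_anti₀ (by positivity) h
          _ = 2/t := by rw [inv_div]
      have h2 : f s ≤ (t + τ - s) ^ (β-1) * (2/t) :=
        mul_le_mul_of_nonneg_left h1 (by positivity)
      have h3 : 0 ≤ (t/2) ^ (β-1) * s⁻¹ := by positivity
      simp only [hg]; nlinarith
  have hmono := intervalIntegral.integral_mono_on hτt hfint hgint hle
  have hI1 : (∫ s in τ..t, s⁻¹) = Real.log t - Real.log τ := by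
    rw [integral_inv_of_pos hτ ht, Real.log_div ht.ne' hτ.ne']
  have hI2 : (∫ s in τ..t, (t + τ - s) ^ (β-1)) = (t^β - τ^β)/β := by
    have h := intervalIntegral.integral_comp_sub_left (a := τ) (b := t)
      (fun u : ℝ => u ^ (β-1)) (t+τ)
    have e1 : t + τ - t = τ := by ring
    have e2 : t + τ - τ = t := by ring
    rw [e1, e2] at h
    rw [h, integral_rpow (Or.inl (by linarith)), sub_add_cancel]
  have hgval : (∫ s in τ..t, g s)
      = (t/2)^(β-1) * (Real.log t - Real.log τ) + (2/t) * ((t^β - τ^β)/β) := by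
    rw [hg]
    rw [intervalIntegral.integral_add hint1 hint2,
      intervalIntegral.integral_const_mul, intervalIntegral.integral_const_mul, hI1, hI2]
  rw [hgval] at hmono
  -- now the elementary estimates
  set M := max (Real.log T) 0 with hM
  set A := |Real.log τ| with hA
  have hM0 : 0 ≤ M := le_max_right _ _
  have hA0 : 0 ≤ A := abs_nonneg _
  have hP : 0 < t ^ (β-1) := Real.rpow_pos_of_pos ht _
  have hL0 : 0 ≤ Real.log t - Real.log τ := by
    have := Real.log_le_log hτ hτt; linarith
  have hLle : Real.log t - Real.log τ ≤ M + A := by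
    have h1 : Real.log t ≤ Real.log T := Real.log_le_log ht htT
    have h2 : -Real.log τ ≤ A := neg_le_abs _
    have h3 : Real.log T ≤ M := le_max_left _ _
    linarith
  have hhalf : (t/2)^(β-1) ≤ 2 * t^(β-1) := by
    have e : (t/2 : ℝ) = t * 2⁻¹ := by ring
    rw [e, Real.mul_rpow (le_of_lt ht) (by norm_num),
      Real.inv_rpow (by norm_num), ← Real.rpow_neg (by norm_num)]
    have : (2:ℝ) ^ (-(β-1)) ≤ 2 ^ (1:ℝ) :=
      Real.rpow_le_rpow_of_exponent_le (by norm_num) (by linarith)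
    rw [Real.rpow_one] at this
    nlinarith
  have htb : (2/t) * ((t^β - τ^β)/β) ≤ (2/β) * t^(β-1) := by
    have e : t^(β-1) = t^β / t := by
      rw [Real.rpow_sub ht, Real.rpow_one]
    have hτβ : 0 ≤ τ^β := Real.rpow_nonneg (le_of_lt hτ) _
    calc (2/t) * ((t^β - τ^β)/β) ≤ (2/t) * (t^β/β) := by
          gcongr
          linarith
      _ = (2/β) * (t^β/t) := by ring
      _ = (2/β) * t^(β-1) := by rw [← e]
  have hstep : (t/2)^(β-1) * (Real.log t - Real.log τ) ≤ 2 * t^(β-1) * (M + A) := by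
    apply mul_le_mul hhalf hLle hL0 (by positivity)
  calc (∫ s in τ..t, f s) ≤ _ := hmono
    _ ≤ 2 * t^(β-1) * (M + A) + (2/β) * t^(β-1) := by linarith
    _ ≤ (2 * (M + 1) + 2/β) * (1 + A) * t^(β-1) := by
        have h2β : 0 < 2/β := by positivity
        nlinarith [mul_nonneg (mul_nonneg hM0 hA0) hP.le, mul_nonneg hA0 hP.le,
          mul_nonneg h2β.le (mul_nonneg hA0 hP.le), hP.le]
    _ = (2 * (max (Real.log T) 0 + 1) + 2 / β) * (1 + A) * t ^ (β-1) := by rw [hM]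
end

section
/- Let β ∈ (0,1) and T > 0. Then there exists a constant C = C(β, T) such that for every τ ∈ (0,1) and every integer n ≥ 2 with nτ ≤ T, setting t_k = kτ, one has Σ_{k=2}^{n} (t_{n+1} − t_k)^{β−1} · log( k/(k−1) ) ≤ C (1 + |log τ|) t_n^{β−1}. -/
/-!
After factoring out `τ^(β-1)` it remains to bound `S = Σ_{k=2}^n (n+1-k)^(β-1) log (k/(k-1))`.
The weights `(n+1-k)^(β-1)` increase with `k` while `log (k/(k-1))` decreases, so Chebyshev's
sum inequality gives `(n-1) S ≤ (Σ_{j=1}^{n-1} j^(β-1)) · Σ_k log (k/(k-1)) ≤ (n-1)^β/β · log n`,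
i.e. `S ≤ 2/β · n^(β-1) · log n`. Finally `log n ≤ log T - log τ` because `nτ ≤ T`.
-/

open Finset Real

lemma antitoneOn_log_div_sub_one :
    AntitoneOn (fun k : ℕ => log ((k : ℝ) / ((k : ℝ) - 1))) (Set.Ici 2) := by
  intro i hi j _ hij
  simp only [Set.mem_Ici] at hi
  have hi' : (2 : ℝ) ≤ i := by exact_mod_cast hi
  have hij' : (i : ℝ) ≤ j := by exact_mod_cast hij
  apply log_le_log (by apply div_pos <;> linarith)
  rw [div_le_div_iff₀ (by linarith) (by linarith)]
  linarith

lemma sum_Icc_log_div_sub_one {n : ℕ} (hn : 1 ≤ n) :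
    ∑ k ∈ Icc 2 n, log ((k : ℝ) / ((k : ℝ) - 1)) = log n := by
  induction n, hn using Nat.le_induction with
  | base => simp
  | succ m hm ih =>
    have hm0 : (0 : ℝ) < m := by exact_mod_cast hm
    rw [sum_Icc_succ_top (by omega), ih]
    push_cast
    rw [add_sub_cancel_right, log_div (by positivity) hm0.ne']
    ring

section
variable {β : ℝ}

-- Bernoulli's inequality `(1 - 1/a)^β ≤ 1 - β/a`, multiplied by `a^β`.
lemma mul_rpow_sub_one_le_rpow_sub_rpow_s10 (hβ0 : 0 < β) (hβ1 : β ≤ 1) {a : ℝ} (ha : 1 ≤ a) :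
    β * a ^ (β - 1) ≤ a ^ β - (a - 1) ^ β := by
  have ha0 : 0 < a := by linarith
  have hbernoulli : (1 + (-1 / a)) ^ β ≤ 1 + β * (-1 / a) :=
    rpow_one_add_le_one_add_mul_self (by rw [neg_div, neg_le_neg_iff, div_le_one ha0]; exact ha)
      hβ0.le hβ1
  have hsplit : (a - 1) ^ β = a ^ β * (1 + (-1 / a)) ^ β := by
    rw [← mul_rpow ha0.le (by rw [neg_div, ← sub_eq_add_neg, sub_nonneg, div_le_one ha0]; exact ha)]
    congr 1
    field_simp
    ring
  have hpow : 0 ≤ a ^ β := rpow_nonneg ha0.le β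
  calc β * a ^ (β - 1) = a ^ β - a ^ β * (1 + β * (-1 / a)) := by
        rw [rpow_sub_one ha0.ne']
        field_simp
        ring
    _ ≤ a ^ β - (a - 1) ^ β := by
        rw [hsplit]
        gcongr

lemma sum_range_rpow_sub_one_le (hβ0 : 0 < β) (hβ1 : β ≤ 1) (m : ℕ) :
    ∑ i ∈ range m, ((i : ℝ) + 1) ^ (β - 1) ≤ (m : ℝ) ^ β / β := by
  rw [le_div_iff₀ hβ0, sum_mul]
  calc ∑ i ∈ range m, ((i : ℝ) + 1) ^ (β - 1) * β
      ≤ ∑ i ∈ range m, (((i + 1 : ℕ) : ℝ) ^ β - ((i : ℕ) : ℝ) ^ β) := by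
        gcongr with i
        push_cast
        have := mul_rpow_sub_one_le_rpow_sub_rpow_s10 hβ0 hβ1 (a := (i : ℝ) + 1) (by simp)
        rw [add_sub_cancel_right] at this
        linarith
    _ = (m : ℝ) ^ β := by
        rw [sum_range_sub (fun i : ℕ => (i : ℝ) ^ β), Nat.cast_zero, zero_rpow hβ0.ne', sub_zero]

lemma sum_Icc_rpow_sub_one_le (hβ0 : 0 < β) (hβ1 : β ≤ 1) (n : ℕ) :
    ∑ k ∈ Icc 2 n, ((n + 1 - k : ℕ) : ℝ) ^ (β - 1) ≤ ((n - 1 : ℕ) : ℝ) ^ β / β := by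
  have hreflect : ∑ k ∈ Icc 2 n, ((n + 1 - k : ℕ) : ℝ) ^ (β - 1)
      = ∑ i ∈ range (n - 1), ((i : ℝ) + 1) ^ (β - 1) := by
    refine sum_nbij' (fun k => n - k) (fun i => n - i) ?_ ?_ ?_ ?_ ?_ <;>
      intro k hk <;> simp only [mem_Icc, mem_range] at hk ⊢ <;> try omega
    rw [show n + 1 - k = (n - k) + 1 by omega]
    push_cast
    rfl
  rw [hreflect]
  exact sum_range_rpow_sub_one_le hβ0 hβ1 (n - 1)

lemma monotoneOn_rpow_succ_sub (hβ1 : β ≤ 1) (n : ℕ) :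
    MonotoneOn (fun k : ℕ => ((n + 1 - k : ℕ) : ℝ) ^ (β - 1)) (Set.Iic n) := by
  intro i _ j hj hij
  simp only [Set.mem_Iic] at hj
  exact rpow_le_rpow_of_nonpos (by norm_cast; omega) (by norm_cast; omega) (by linarith)

lemma sub_one_rpow_sub_one_le (hβ0 : 0 ≤ β) (hβ1 : β ≤ 1) {x : ℝ} (hx : 2 ≤ x) :
    (x - 1) ^ (β - 1) ≤ 2 * x ^ (β - 1) :=
  calc (x - 1) ^ (β - 1) ≤ (x / 2) ^ (β - 1) :=
        rpow_le_rpow_of_nonpos (by positivity) (by linarith) (by linarith)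
    _ = 2 ^ (1 - β) * x ^ (β - 1) := by
        rw [div_eq_mul_inv, mul_rpow (by positivity) (by norm_num), inv_rpow (by norm_num),
          ← rpow_neg (by norm_num), neg_sub, mul_comm]
    _ ≤ 2 * x ^ (β - 1) := by
        gcongr
        exact rpow_le_self_of_one_le (by norm_num) (by linarith)

lemma weighted_log_sum_le (hβ0 : 0 < β) (hβ1 : β ≤ 1) {n : ℕ} (hn : 2 ≤ n) :
    ∑ k ∈ Icc 2 n, ((n + 1 - k : ℕ) : ℝ) ^ (β - 1) * log ((k : ℝ) / ((k : ℝ) - 1))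
      ≤ 2 / β * (n : ℝ) ^ (β - 1) * log n := by
  set S := ∑ k ∈ Icc 2 n, ((n + 1 - k : ℕ) : ℝ) ^ (β - 1) * log ((k : ℝ) / ((k : ℝ) - 1))
  have hn' : (2 : ℝ) ≤ n := by exact_mod_cast hn
  have hpred : ((n - 1 : ℕ) : ℝ) = (n : ℝ) - 1 := by
    rw [Nat.cast_sub (by omega), Nat.cast_one]
  have hcard : ((#(Icc 2 n) : ℕ) : ℝ) = (n : ℝ) - 1 := by
    rw [Nat.card_Icc, show n + 1 - 2 = n - 1 by omega, hpred]
  have hcheb := AntivaryOn.card_mul_sum_le_sum_mul_sum (s := Icc 2 n)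
    ((monotoneOn_rpow_succ_sub hβ1 n).mono (fun k hk => (mem_Icc.mp hk).2)
      |>.antivaryOn (antitoneOn_log_div_sub_one.mono (fun k hk => (mem_Icc.mp hk).1)))
  rw [sum_Icc_log_div_sub_one (by omega), hcard] at hcheb
  have hlog : 0 ≤ log (n : ℝ) := log_nonneg (by linarith)
  have hweights := sum_Icc_rpow_sub_one_le hβ0 hβ1 n
  rw [hpred] at hweights
  have hn1 : (0 : ℝ) < n - 1 := by linarith
  have hscaled : ((n : ℝ) - 1) * S ≤ ((n : ℝ) - 1) * (((n : ℝ) - 1) ^ (β - 1) / β * log n) :=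
    calc ((n : ℝ) - 1) * S ≤ (∑ k ∈ Icc 2 n, ((n + 1 - k : ℕ) : ℝ) ^ (β - 1)) * log n := hcheb
      _ ≤ ((n : ℝ) - 1) ^ β / β * log n := by gcongr
      _ = ((n : ℝ) - 1) * (((n : ℝ) - 1) ^ (β - 1) / β * log n) := by
          rw [rpow_sub_one hn1.ne']
          field_simp
  calc S ≤ ((n : ℝ) - 1) ^ (β - 1) / β * log n := le_of_mul_le_mul_left hscaled hn1
    _ ≤ 2 * (n : ℝ) ^ (β - 1) / β * log n := by
        gcongr
        exact sub_one_rpow_sub_one_le hβ0.le hβ1 hn'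
    _ = 2 / β * (n : ℝ) ^ (β - 1) * log n := by ring

end

theorem stmt_10_general (β T : ℝ) (hβ0 : 0 < β) (hβ1 : β < 1) :
    ∃ C : ℝ, 0 < C ∧ ∀ τ : ℝ, 0 < τ → τ < 1 → ∀ n : ℕ, 2 ≤ n → (n : ℝ) * τ ≤ T →
      (∑ k ∈ Finset.Icc 2 n,
          (((n + 1 - k : ℕ) : ℝ) * τ) ^ (β - 1) * Real.log ((k : ℝ) / ((k : ℝ) - 1)))
        ≤ C * (1 + |Real.log τ|) * ((n : ℝ) * τ) ^ (β - 1) := by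
  refine ⟨2 * (1 + |log T|) / β, by positivity, fun τ hτ0 _ n hn hnT => ?_⟩
  have hn0 : (0 : ℝ) < n := by positivity
  have hlogn : log n ≤ |log T| + |log τ| := by
    have h := log_le_log (by positivity) hnT
    rw [log_mul hn0.ne' hτ0.ne'] at h
    linarith [le_abs_self (log T), neg_abs_le (log τ)]
  have hfactor :
      ∑ k ∈ Icc 2 n, (((n + 1 - k : ℕ) : ℝ) * τ) ^ (β - 1) * log ((k : ℝ) / ((k : ℝ) - 1))
        = τ ^ (β - 1) *
          ∑ k ∈ Icc 2 n, ((n + 1 - k : ℕ) : ℝ) ^ (β - 1) * log ((k : ℝ) / ((k : ℝ) - 1)) := by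
    rw [mul_sum]
    refine sum_congr rfl fun k _ => ?_
    rw [mul_rpow (Nat.cast_nonneg _) hτ0.le]
    ring
  rw [hfactor, mul_rpow hn0.le hτ0.le]
  calc _ ≤ τ ^ (β - 1) * (2 / β * (n : ℝ) ^ (β - 1) * log n) := by
        gcongr
        exact weighted_log_sum_le hβ0 hβ1.le hn
    _ ≤ τ ^ (β - 1) * (2 / β * (n : ℝ) ^ (β - 1) * ((1 + |log T|) * (1 + |log τ|))) := by
        gcongr
        nlinarith [abs_nonneg (log T), abs_nonneg (log τ)]
    _ = _ := by ring

/-- Discrete weakly singular logarithmic sum bound from the paper's proof of Lemma 4.15: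
on the uniform grid `t_k = kτ`, `Σ_{k=2}^n (t_{n+1}-t_k)^{β-1} log(k/(k-1))
≤ C (1+|log τ|) t_n^{β-1}`. -/
theorem stmt_10 (β T : ℝ) (hβ0 : 0 < β) (hβ1 : β < 1) (hT : 0 < T) :
    ∃ C : ℝ, 0 < C ∧ ∀ τ : ℝ, 0 < τ → τ < 1 → ∀ n : ℕ, 2 ≤ n → (n : ℝ) * τ ≤ T →
      (∑ k ∈ Finset.Icc 2 n,
          (((n + 1 - k : ℕ) : ℝ) * τ) ^ (β - 1) * Real.log ((k : ℝ) / ((k : ℝ) - 1)))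
        ≤ C * (1 + |Real.log τ|) * ((n : ℝ) * τ) ^ (β - 1) :=
  stmt_10_general β T hβ0 hβ1
end

section
/- Let 0 < α < 1 and T > 0. Then there exists a constant C = C(α, T) such that for every h ∈ (0,1) and every t ∈ (0,T], one has ∫₀ᵗ min( h² (t − s)^{−1}, (t − s)^{α−1} ) ds ≤ C h² (1 + |log h|). -/
open MeasureTheory Set

/-- Integral bound from the paper's proof of Lemma 4.4:
`∫₀ᵗ min(h² (t-s)⁻¹, (t-s)^{α-1}) ds ≤ C h² (1+|log h|)` for `h ∈ (0,1)`, `t ∈ (0,T]`. -/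
theorem stmt_14 (α T : ℝ) (hα0 : 0 < α) (hα1 : α < 1) (hT : 0 < T) :
    ∃ C : ℝ, 0 < C ∧ ∀ h : ℝ, 0 < h → h < 1 → ∀ t : ℝ, 0 < t → t ≤ T →
      (∫ s in Ioo (0 : ℝ) t, min (h ^ 2 * (t - s)⁻¹) ((t - s) ^ (α - 1)))
        ≤ C * h ^ 2 * (1 + |Real.log h|) := by
  refine ⟨Real.exp 2 * (max 1 T) ^ α / α, by positivity, ?_⟩
  intro h h0 h1 t ht0 htT
  set L := |Real.log h| with hLdef
  have hL0 : 0 ≤ L := abs_nonneg _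
  set ε : ℝ := 1 / (1 + L) with hεdef
  have h1L : (0:ℝ) < 1 + L := by linarith
  have hε0 : 0 < ε := by positivity
  have hε1 : ε ≤ 1 := by
    rw [hεdef, div_le_one h1L]; linarith
  have hαε : 0 < α * ε := mul_pos hα0 hε0
  -- pointwise bound
  have key : ∀ s ∈ Ioo (0:ℝ) t, min (h ^ 2 * (t - s)⁻¹) ((t - s) ^ (α - 1))
      ≤ h ^ (2*(1-ε)) * (t - s) ^ (α*ε - 1) := by
    intro s hs
    obtain ⟨hs0, hst⟩ := hs
    set u := t - s with hu
    have hu0 : 0 < u := by simp [hu]; linarith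
    have ha : 0 < h ^ 2 * u⁻¹ := by positivity
    have hb : 0 < u ^ (α - 1) := Real.rpow_pos_of_pos hu0 _
    have hm : 0 < min (h ^ 2 * u⁻¹) (u ^ (α - 1)) := lt_min ha hb
    have step1 : min (h ^ 2 * u⁻¹) (u ^ (α - 1))
        ≤ (h ^ 2 * u⁻¹) ^ (1-ε) * (u ^ (α - 1)) ^ ε := by
      calc min (h ^ 2 * u⁻¹) (u ^ (α - 1))
          = (min (h ^ 2 * u⁻¹) (u ^ (α - 1))) ^ ((1-ε) + ε) := by
            rw [sub_add_cancel, Real.rpow_one]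
        _ = (min (h ^ 2 * u⁻¹) (u ^ (α - 1))) ^ (1-ε)
            * (min (h ^ 2 * u⁻¹) (u ^ (α - 1))) ^ ε := Real.rpow_add hm _ _
        _ ≤ (h ^ 2 * u⁻¹) ^ (1-ε) * (u ^ (α - 1)) ^ ε :=
            mul_le_mul (Real.rpow_le_rpow hm.le (min_le_left _ _) (by linarith))
              (Real.rpow_le_rpow hm.le (min_le_right _ _) hε0.le)
              (Real.rpow_nonneg hm.le _) (Real.rpow_nonneg ha.le _)
    have e1 : (h ^ 2 * u⁻¹) ^ (1-ε) = h ^ (2*(1-ε)) * u ^ (-(1-ε)) := by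
      rw [Real.mul_rpow (by positivity) (by positivity),
        ← Real.rpow_natCast h 2, ← Real.rpow_mul h0.le,
        ← Real.rpow_neg_one u, ← Real.rpow_mul hu0.le]
      norm_num
    have e2 : (u ^ (α - 1)) ^ ε = u ^ ((α-1)*ε) := by
      rw [← Real.rpow_mul hu0.le]
    have e3 : u ^ (-(1-ε)) * u ^ ((α-1)*ε) = u ^ (α*ε - 1) := by
      rw [← Real.rpow_add hu0]; ring_nf
    calc min (h ^ 2 * u⁻¹) (u ^ (α - 1))
        ≤ (h ^ 2 * u⁻¹) ^ (1-ε) * (u ^ (α - 1)) ^ ε := step1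
      _ = h ^ (2*(1-ε)) * (u ^ (-(1-ε)) * u ^ ((α-1)*ε)) := by
          rw [e1, e2]; ring
      _ = h ^ (2*(1-ε)) * u ^ (α*ε - 1) := by rw [e3]
  -- integrability of bound
  have hii : IntervalIntegrable (fun u : ℝ => u ^ (α*ε - 1)) volume 0 t :=
    intervalIntegral.intervalIntegrable_rpow' (by linarith)
  have hiig : IntegrableOn (fun s : ℝ => h ^ (2*(1-ε)) * (t - s) ^ (α*ε - 1)) (Ioo 0 t) := by
    have h2 := (hii.comp_sub_left t).2
    simp only [sub_self, sub_zero] at h2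
    exact ((h2.mono_set Ioo_subset_Ioc_self).const_mul _)
  -- integrability of min
  have hmeas : Measurable (fun s : ℝ => min (h ^ 2 * (t - s)⁻¹) ((t - s) ^ (α - 1))) := by
    fun_prop
  have hiif : IntegrableOn (fun s : ℝ => min (h ^ 2 * (t - s)⁻¹) ((t - s) ^ (α - 1))) (Ioo 0 t) := by
    refine hiig.mono' hmeas.aestronglyMeasurable ?_
    rw [ae_restrict_iff' measurableSet_Ioo]
    filter_upwards with s hs
    have h1' : 0 ≤ min (h ^ 2 * (t - s)⁻¹) ((t - s) ^ (α - 1)) := by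
      have : 0 < t - s := by linarith [hs.2]
      exact le_min (by positivity) (Real.rpow_nonneg this.le _)
    rw [Real.norm_eq_abs, abs_of_nonneg h1']
    exact key s hs
  -- value of bound integral
  have hval : ∫ s in Ioo (0:ℝ) t, h ^ (2*(1-ε)) * (t - s) ^ (α*ε - 1)
      = h ^ (2*(1-ε)) * (t ^ (α*ε) / (α*ε)) := by
    rw [← integral_Ioc_eq_integral_Ioo,
      ← intervalIntegral.integral_of_le ht0.le, intervalIntegral.integral_const_mul]
    congr 1
    have hcomp : (∫ s in (0:ℝ)..t, (t - s) ^ (α*ε - 1)) = ∫ u in (0:ℝ)..t, u ^ (α*ε - 1) := by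
      have := intervalIntegral.integral_comp_sub_left (a := 0) (b := t)
        (fun u : ℝ => u ^ (α*ε - 1)) t
      simpa using this
    rw [hcomp, integral_rpow (Or.inl (by linarith))]
    rw [Real.zero_rpow (by linarith : α*ε - 1 + 1 ≠ 0)]
    ring_nf
  have hmono : (∫ s in Ioo (0:ℝ) t, min (h ^ 2 * (t - s)⁻¹) ((t - s) ^ (α - 1)))
      ≤ ∫ s in Ioo (0:ℝ) t, h ^ (2*(1-ε)) * (t - s) ^ (α*ε - 1) :=
    setIntegral_mono_on hiif hiig measurableSet_Ioo key
  -- final estimate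
  have hεL : ε * L ≤ 1 := by
    rw [hεdef]
    rw [div_mul_eq_mul_div, div_le_one h1L]; linarith
  have hh1 : h ^ (2*(1-ε)) ≤ h ^ 2 * Real.exp 2 := by
    have : h ^ (2*(1-ε)) = h ^ 2 * h ^ (-(2*ε)) := by
      rw [← Real.rpow_natCast h 2, ← Real.rpow_add h0]
      ring_nf
    rw [this]
    apply mul_le_mul_of_nonneg_left _ (by positivity)
    rw [Real.rpow_def_of_pos h0]
    apply Real.exp_le_exp.2
    have hlog : Real.log h * (-(2*ε)) ≤ 2 * (ε * L) := by
      have := neg_abs_le (Real.log h)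
      nlinarith [hε0.le]
    nlinarith
  have ht1 : t ^ (α*ε) ≤ (max 1 T) ^ α := by
    calc t ^ (α*ε) ≤ (max 1 T) ^ (α*ε) :=
          Real.rpow_le_rpow ht0.le (le_trans htT (le_max_right 1 T)) hαε.le
      _ ≤ (max 1 T) ^ α := by
          apply Real.rpow_le_rpow_of_exponent_le (le_max_left 1 T)
          nlinarith
  have hinv : 1 / (α * ε) = (1 + L) / α := by
    rw [hεdef]; field_simp
  calc (∫ s in Ioo (0:ℝ) t, min (h ^ 2 * (t - s)⁻¹) ((t - s) ^ (α - 1)))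
      ≤ h ^ (2*(1-ε)) * (t ^ (α*ε) / (α*ε)) := hmono.trans_eq hval
    _ ≤ (h ^ 2 * Real.exp 2) * ((max 1 T) ^ α / (α*ε)) := by
        apply mul_le_mul hh1 _ (by positivity) (by positivity)
        gcongr
    _ = Real.exp 2 * (max 1 T) ^ α / α * h ^ 2 * (1 + L) := by
        have : (max 1 T) ^ α / (α*ε) = (max 1 T) ^ α * (1/(α*ε)) := by ring
        rw [this, hinv]; ring
end
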